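/- For any third order tensor X in R^{n1×n2×n3}, TriRank(X) is at most the middle value of the Tucker rank: TriRank(X) ≤ mid{r1, r2, r3}, where r_k is the matrix rank of the mode-k unfolding of X. -/

import Mathlib

/-!
Choose for each mode `k` a matrix `U_k` whose `r_k` columns are a basis of the column space of
the unfolding `X_(k)`, and a left inverse `L_k` of it. Since `U_k L_k` fixes that column space,
`X = D ×₁ U₁ ×₂ U₂ ×₃ U₃` with an `r₁ × r₂ × r₃` core `D = X ×₁ L₁ ×₂ L₂ ×₃ L₃`. Mode products act
on a triple product factor by factor, so it suffices to write `D` as a triple product of size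
`r = mid(r₁, r₂, r₃)`. Two of the `r_k` are at most `r`; if these are `r₁, r₂`, take
`A_{iqs} = [q = i]`, `B_{pjs} = [p = j = s]` and `C_{pqt} = D_{qpt}` (padded by zeros). The other
two cases reduce to this one by a cyclic rotation of the modes, under which triple products are
again triple products.
-/

open Matrix

noncomputable def tripleProd {n1 n2 n3 r : ℕ}
    (A : Fin n1 → Fin r → Fin r → ℝ) (B : Fin r → Fin n2 → Fin r → ℝ)
    (C : Fin r → Fin r → Fin n3 → ℝ) : Fin n1 → Fin n2 → Fin n3 → ℝ :=
  fun i j t => ∑ p : Fin r, ∑ q : Fin r, ∑ s : Fin r, A i q s * B p j s * C p q t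

noncomputable def TriRank {n1 n2 n3 : ℕ} (X : Fin n1 → Fin n2 → Fin n3 → ℝ) : ℕ :=
  sInf {r : ℕ | ∃ (A : Fin n1 → Fin r → Fin r → ℝ) (B : Fin r → Fin n2 → Fin r → ℝ)
    (C : Fin r → Fin r → Fin n3 → ℝ), X = tripleProd A B C}

noncomputable def CPRank {n1 n2 n3 : ℕ} (X : Fin n1 → Fin n2 → Fin n3 → ℝ) : ℕ :=
  sInf {r : ℕ | ∃ (A : Fin n1 → Fin r → ℝ) (B : Fin n2 → Fin r → ℝ) (C : Fin n3 → Fin r → ℝ),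
    X = fun i j t => ∑ p : Fin r, A i p * B j p * C t p}

def mid (a b c : ℕ) : ℕ := max (min a b) (min (max a b) c)

noncomputable def mode1 {m' m n k : ℕ} (U : Matrix (Fin m') (Fin m) ℝ)
    (D : Fin m → Fin n → Fin k → ℝ) : Fin m' → Fin n → Fin k → ℝ :=
  fun i j t => ∑ p : Fin m, U i p * D p j t

noncomputable def mode2 {m n' n k : ℕ} (V : Matrix (Fin n') (Fin n) ℝ)
    (D : Fin m → Fin n → Fin k → ℝ) : Fin m → Fin n' → Fin k → ℝ :=
  fun i j t => ∑ q : Fin n, V j q * D i q t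

noncomputable def mode3 {m n k' k : ℕ} (W : Matrix (Fin k') (Fin k) ℝ)
    (D : Fin m → Fin n → Fin k → ℝ) : Fin m → Fin n → Fin k' → ℝ :=
  fun i j t => ∑ s : Fin k, W t s * D i j s

noncomputable def tucker {n1 n2 n3 r1 r2 r3 : ℕ} (U : Matrix (Fin n1) (Fin r1) ℝ)
    (V : Matrix (Fin n2) (Fin r2) ℝ) (W : Matrix (Fin n3) (Fin r3) ℝ)
    (D : Fin r1 → Fin r2 → Fin r3 → ℝ) : Fin n1 → Fin n2 → Fin n3 → ℝ :=
  mode1 U (mode2 V (mode3 W D))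

def unfold1 {a b c : ℕ} (T : Fin a → Fin b → Fin c → ℝ) : Matrix (Fin a) (Fin b × Fin c) ℝ :=
  fun i jt => T i jt.1 jt.2
def unfold2 {a b c : ℕ} (T : Fin a → Fin b → Fin c → ℝ) : Matrix (Fin b) (Fin a × Fin c) ℝ :=
  fun j it => T it.1 j it.2
def unfold3 {a b c : ℕ} (T : Fin a → Fin b → Fin c → ℝ) : Matrix (Fin c) (Fin a × Fin b) ℝ :=
  fun t ij => T ij.1 ij.2 t

theorem Matrix.exists_mul_mul_self_eq {K m ι : Type*} [Field K] [Fintype m]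
    [Fintype ι] (M : Matrix m ι K) :
    ∃ (U : Matrix m (Fin M.rank) K) (L : Matrix (Fin M.rank) m K), U * L * M = M := by
  classical
  let S := LinearMap.range M.mulVecLin
  let f : (Fin M.rank → K) →ₗ[K] m → K :=
    S.subtype ∘ₗ (Module.finBasis K S).equivFun.symm.toLinearMap
  have hf : LinearMap.ker f = ⊥ :=
    LinearMap.ker_eq_bot.2 (S.injective_subtype.comp (LinearEquiv.injective _))
  obtain ⟨g, hg⟩ := f.exists_leftInverse_of_injective hf
  refine ⟨LinearMap.toMatrix' f, LinearMap.toMatrix' g,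
    Matrix.toLin'.injective (LinearMap.ext fun v => ?_)⟩
  obtain ⟨w, hw⟩ : ∃ w, f w = M *ᵥ v :=
    ⟨(Module.finBasis K S).equivFun ⟨_, v, rfl⟩,
      congrArg Subtype.val ((Module.finBasis K S).equivFun.symm_apply_apply _)⟩
  have hgf : g (f w) = w := LinearMap.congr_fun hg w
  simp [Matrix.toLin'_mul, ← hw, hgf]

section ModeProducts

variable {m m' m'' n n' n'' k k' k'' : ℕ}

theorem mode1_mode2_comm (A : Matrix (Fin m') (Fin m) ℝ) (B : Matrix (Fin n') (Fin n) ℝ)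
    (D : Fin m → Fin n → Fin k → ℝ) : mode1 A (mode2 B D) = mode2 B (mode1 A D) := by
  funext i j t
  simp only [mode1, mode2, Finset.mul_sum]
  rw [Finset.sum_comm]
  simp only [mul_left_comm]

theorem mode1_mode3_comm (A : Matrix (Fin m') (Fin m) ℝ) (C : Matrix (Fin k') (Fin k) ℝ)
    (D : Fin m → Fin n → Fin k → ℝ) : mode1 A (mode3 C D) = mode3 C (mode1 A D) := by
  funext i j t
  simp only [mode1, mode3, Finset.mul_sum]
  rw [Finset.sum_comm]
  simp only [mul_left_comm]

theorem mode2_mode3_comm (B : Matrix (Fin n') (Fin n) ℝ) (C : Matrix (Fin k') (Fin k) ℝ)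
    (D : Fin m → Fin n → Fin k → ℝ) : mode2 B (mode3 C D) = mode3 C (mode2 B D) := by
  funext i j t
  simp only [mode2, mode3, Finset.mul_sum]
  rw [Finset.sum_comm]
  simp only [mul_left_comm]

theorem mode1_mode1 (A : Matrix (Fin m'') (Fin m') ℝ) (B : Matrix (Fin m') (Fin m) ℝ)
    (D : Fin m → Fin n → Fin k → ℝ) : mode1 A (mode1 B D) = mode1 (A * B) D := by
  funext i j t
  simp only [mode1, Matrix.mul_apply, Finset.mul_sum, Finset.sum_mul]
  rw [Finset.sum_comm]
  simp only [mul_assoc]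

theorem mode2_mode2 (A : Matrix (Fin n'') (Fin n') ℝ) (B : Matrix (Fin n') (Fin n) ℝ)
    (D : Fin m → Fin n → Fin k → ℝ) : mode2 A (mode2 B D) = mode2 (A * B) D := by
  funext i j t
  simp only [mode2, Matrix.mul_apply, Finset.mul_sum, Finset.sum_mul]
  rw [Finset.sum_comm]
  simp only [mul_assoc]

theorem mode3_mode3 (A : Matrix (Fin k'') (Fin k') ℝ) (B : Matrix (Fin k') (Fin k) ℝ)
    (D : Fin m → Fin n → Fin k → ℝ) : mode3 A (mode3 B D) = mode3 (A * B) D := by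
  funext i j t
  simp only [mode3, Matrix.mul_apply, Finset.mul_sum, Finset.sum_mul]
  rw [Finset.sum_comm]
  simp only [mul_assoc]

theorem mode1_eq_self_of_mul_unfold1 {P : Matrix (Fin m) (Fin m) ℝ}
    {D : Fin m → Fin n → Fin k → ℝ} (h : P * unfold1 D = unfold1 D) : mode1 P D = D :=
  funext fun i => funext fun j => funext fun t => congr_fun (congr_fun h i) (j, t)

theorem mode2_eq_self_of_mul_unfold2 {P : Matrix (Fin n) (Fin n) ℝ}
    {D : Fin m → Fin n → Fin k → ℝ} (h : P * unfold2 D = unfold2 D) : mode2 P D = D :=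
  funext fun i => funext fun j => funext fun t => congr_fun (congr_fun h j) (i, t)

theorem mode3_eq_self_of_mul_unfold3 {P : Matrix (Fin k) (Fin k) ℝ}
    {D : Fin m → Fin n → Fin k → ℝ} (h : P * unfold3 D = unfold3 D) : mode3 P D = D :=
  funext fun i => funext fun j => funext fun t => congr_fun (congr_fun h t) (i, j)

end ModeProducts

def IsTripleProd {n1 n2 n3 : ℕ} (r : ℕ) (X : Fin n1 → Fin n2 → Fin n3 → ℝ) : Prop :=
  ∃ (A : Fin n1 → Fin r → Fin r → ℝ) (B : Fin r → Fin n2 → Fin r → ℝ)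
    (C : Fin r → Fin r → Fin n3 → ℝ), X = tripleProd A B C

def rotateModes {a b c : ℕ} (T : Fin a → Fin b → Fin c → ℝ) : Fin b → Fin c → Fin a → ℝ :=
  fun j t i => T i j t

section TripleProd

variable {n1 n2 n3 m r : ℕ}

theorem mode1_tripleProd (U : Matrix (Fin n1) (Fin m) ℝ) (A : Fin m → Fin r → Fin r → ℝ)
    (B : Fin r → Fin n2 → Fin r → ℝ) (C : Fin r → Fin r → Fin n3 → ℝ) :
    mode1 U (tripleProd A B C) = tripleProd (mode1 U A) B C := by
  funext i j t
  simp only [mode1, tripleProd, Finset.mul_sum, Finset.sum_mul]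
  rw [Finset.sum_comm]; refine Finset.sum_congr rfl fun p _ => ?_
  rw [Finset.sum_comm]; refine Finset.sum_congr rfl fun q _ => ?_
  rw [Finset.sum_comm]; simp only [mul_assoc]

theorem mode2_tripleProd (V : Matrix (Fin n2) (Fin m) ℝ) (A : Fin n1 → Fin r → Fin r → ℝ)
    (B : Fin r → Fin m → Fin r → ℝ) (C : Fin r → Fin r → Fin n3 → ℝ) :
    mode2 V (tripleProd A B C) = tripleProd A (mode2 V B) C := by
  funext i j t
  simp only [mode2, tripleProd, Finset.mul_sum, Finset.sum_mul]
  rw [Finset.sum_comm]; refine Finset.sum_congr rfl fun p _ => ?_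
  rw [Finset.sum_comm]; refine Finset.sum_congr rfl fun q _ => ?_
  rw [Finset.sum_comm]; simp only [mul_left_comm, mul_assoc]

theorem mode3_tripleProd (W : Matrix (Fin n3) (Fin m) ℝ) (A : Fin n1 → Fin r → Fin r → ℝ)
    (B : Fin r → Fin n2 → Fin r → ℝ) (C : Fin r → Fin r → Fin m → ℝ) :
    mode3 W (tripleProd A B C) = tripleProd A B (mode3 W C) := by
  funext i j t
  simp only [mode3, tripleProd, Finset.mul_sum]
  rw [Finset.sum_comm]; refine Finset.sum_congr rfl fun p _ => ?_
  rw [Finset.sum_comm]; refine Finset.sum_congr rfl fun q _ => ?_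
  rw [Finset.sum_comm]; simp only [mul_left_comm, mul_comm]

theorem rotateModes_tripleProd (A : Fin n1 → Fin r → Fin r → ℝ) (B : Fin r → Fin n2 → Fin r → ℝ)
    (C : Fin r → Fin r → Fin n3 → ℝ) :
    rotateModes (tripleProd A B C) =
      tripleProd (fun j s p => B p j s) (fun q t p => C p q t) (fun q s i => A i q s) := by
  funext j t i
  simp only [rotateModes, tripleProd]
  rw [Finset.sum_comm]; refine Finset.sum_congr rfl fun q _ => ?_
  rw [Finset.sum_comm]; simp only [mul_comm, mul_left_comm]

namespace IsTripleProd

variable {X : Fin n1 → Fin n2 → Fin n3 → ℝ}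

theorem triRank_le (h : IsTripleProd r X) : TriRank X ≤ r := Nat.sInf_le h

theorem rotateModes (h : IsTripleProd r X) : IsTripleProd r (rotateModes X) := by
  obtain ⟨A, B, C, rfl⟩ := h
  exact ⟨_, _, _, rotateModes_tripleProd A B C⟩

theorem tucker {r1 r2 r3 : ℕ} {D : Fin r1 → Fin r2 → Fin r3 → ℝ} (h : IsTripleProd r D)
    (U : Matrix (Fin n1) (Fin r1) ℝ) (V : Matrix (Fin n2) (Fin r2) ℝ)
    (W : Matrix (Fin n3) (Fin r3) ℝ) : IsTripleProd r (tucker U V W D) := by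
  obtain ⟨A, B, C, rfl⟩ := h
  exact ⟨mode1 U A, mode2 V B, mode3 W C, by
    rw [_root_.tucker, mode3_tripleProd, mode2_tripleProd, mode1_tripleProd]⟩

end IsTripleProd

theorem isTripleProd_of_le_of_le (h1 : n1 ≤ r) (h2 : n2 ≤ r)
    (X : Fin n1 → Fin n2 → Fin n3 → ℝ) : IsTripleProd r X := by
  refine ⟨fun i q _ => if Fin.castLE h1 i = q then 1 else 0,
    fun p j s => if Fin.castLE h2 j = p ∧ Fin.castLE h2 j = s then 1 else 0,
    fun p q t => if h : p.1 < n2 ∧ q.1 < n1 then X ⟨q, h.2⟩ ⟨p, h.1⟩ t else 0, ?_⟩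
  funext i j t
  simp only [tripleProd]
  rw [Fintype.sum_eq_single (Fin.castLE h2 j) fun p hp => by simp [Ne.symm hp],
    Fintype.sum_eq_single (Fin.castLE h1 i) fun q hq => by simp [Ne.symm hq],
    Fintype.sum_eq_single (Fin.castLE h2 j) fun s hs => by simp [Ne.symm hs]]
  simp

theorem isTripleProd_of_two_le
    (h : n1 ≤ r ∧ n2 ≤ r ∨ n1 ≤ r ∧ n3 ≤ r ∨ n2 ≤ r ∧ n3 ≤ r)
    (X : Fin n1 → Fin n2 → Fin n3 → ℝ) : IsTripleProd r X := by
  rcases h with ⟨h1, h2⟩ | ⟨h1, h3⟩ | ⟨h2, h3⟩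
  · exact isTripleProd_of_le_of_le h1 h2 X
  · exact (isTripleProd_of_le_of_le h3 h1 (rotateModes (rotateModes X))).rotateModes
  · exact (isTripleProd_of_le_of_le h2 h3 (rotateModes X)).rotateModes.rotateModes

end TripleProd

theorem exists_tucker_eq {n1 n2 n3 : ℕ} (X : Fin n1 → Fin n2 → Fin n3 → ℝ) :
    ∃ (U : Matrix (Fin n1) (Fin (unfold1 X).rank) ℝ) (V : Matrix (Fin n2) (Fin (unfold2 X).rank) ℝ)
      (W : Matrix (Fin n3) (Fin (unfold3 X).rank) ℝ)
      (D : Fin (unfold1 X).rank → Fin (unfold2 X).rank → Fin (unfold3 X).rank → ℝ),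
      X = tucker U V W D := by
  obtain ⟨U, L1, h1⟩ := (unfold1 X).exists_mul_mul_self_eq
  obtain ⟨V, L2, h2⟩ := (unfold2 X).exists_mul_mul_self_eq
  obtain ⟨W, L3, h3⟩ := (unfold3 X).exists_mul_mul_self_eq
  refine ⟨U, V, W, mode1 L1 (mode2 L2 (mode3 L3 X)), ?_⟩
  rw [tucker, ← mode1_mode3_comm, ← mode2_mode3_comm, mode3_mode3,
    mode3_eq_self_of_mul_unfold3 h3, ← mode1_mode2_comm, mode2_mode2,
    mode2_eq_self_of_mul_unfold2 h2, mode1_mode1, mode1_eq_self_of_mul_unfold1 h1]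

theorem stmt8 {n1 n2 n3 : ℕ} (X : Fin n1 → Fin n2 → Fin n3 → ℝ) :
    TriRank X ≤ mid (unfold1 X).rank (unfold2 X).rank (unfold3 X).rank := by
  obtain ⟨U, V, W, D, hX⟩ := exists_tucker_eq X
  have hD : IsTripleProd (mid (unfold1 X).rank (unfold2 X).rank (unfold3 X).rank) D :=
    isTripleProd_of_two_le (by unfold mid; omega) D
  exact (congrArg TriRank hX).trans_le (hD.tucker U V W).triRank_le
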